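/- Let H be a connected q-regular graph of order n ≥ 2 having at least one edge, with least adjacency eigenvalue λ_n(H). Then for every integer k ≥ 1, the least adjacency eigenvalue of the lexicographic power H^k equals n^{k−1}·λ_n(H) + q·(n^{k−1} − 1)/(n − 1). -/

import Mathlib

open Matrix Finset

universe u

/-- The lexicographic product `H[G]` of two simple graphs. -/
def lexProd {α β : Type u} (H : SimpleGraph α) (G : SimpleGraph β) :
    SimpleGraph (α × β) where
  Adj x y := H.Adj x.1 y.1 ∨ (x.1 = y.1 ∧ G.Adj x.2 y.2)
  symm := ⟨fun x y h => by
    rcases h with h | ⟨h1, h2⟩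
    · exact Or.inl (H.symm.symm _ _ h)
    · exact Or.inr ⟨h1.symm, G.symm.symm _ _ h2⟩⟩
  loopless := ⟨fun x h => by
    rcases h with h | ⟨_, h2⟩
    · exact H.loopless.irrefl _ h
    · exact G.loopless.irrefl _ h2⟩

/-- Vertex type of the iterated lexicographic product `H^k[G]`. -/
def lexIterVert (α β : Type u) : ℕ → Type u
  | 0 => β
  | k + 1 => α × lexIterVert α β k

/-- Iterated lexicographic product: `H^0[G] = G`, `H^k[G] = H[H^{k-1}[G]]`. -/
def lexIter {α β : Type u} (H : SimpleGraph α) (G : SimpleGraph β) :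
    (k : ℕ) → SimpleGraph (lexIterVert α β k)
  | 0 => G
  | k + 1 => lexProd H (lexIter H G k)

instance lexIterVert.instFintype {α β : Type u} [Fintype α] [Fintype β] :
    ∀ k, Fintype (lexIterVert α β k)
  | 0 => inferInstanceAs (Fintype β)
  | k + 1 =>
      letI := lexIterVert.instFintype (α := α) (β := β) k
      inferInstanceAs (Fintype (α × lexIterVert α β k))

/-- Vertex type of the lexicographic power `H^k` (with `H^0 = K_1`). -/
def powVert (α : Type u) : ℕ → Type u
  | 0 => PUnit
  | 1 => α
  | k + 2 => powVert α (k + 1) × α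

/-- Lexicographic powers of a graph: `H^1 = H` and `H^k = H^{k-1}[H]` for `k ≥ 2`. -/
def lexPow {α : Type u} (H : SimpleGraph α) : (k : ℕ) → SimpleGraph (powVert α k)
  | 0 => ⊥
  | 1 => H
  | k + 2 => lexProd (lexPow H (k + 1)) H

instance powVert.instFintype {α : Type u} [Fintype α] : ∀ k, Fintype (powVert α k)
  | 0 => inferInstanceAs (Fintype PUnit)
  | 1 => inferInstanceAs (Fintype α)
  | k + 2 =>
      letI := powVert.instFintype (α := α) (k + 1)
      inferInstanceAs (Fintype (powVert α (k + 1) × α))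

/-- The degree of a vertex. -/
noncomputable def gdeg {α : Type u} [Fintype α] (G : SimpleGraph α) (v : α) : ℕ := by
  classical exact G.degree v

/-- The adjacency spectrum of a graph, as the multiset of roots (eigenvalues, with
multiplicity) of the characteristic polynomial of its adjacency matrix over `ℝ`. -/
noncomputable def adjSpectrum {α : Type u} [Fintype α] (G : SimpleGraph α) : Multiset ℝ := by
  classical exact (Matrix.charpoly (G.adjMatrix ℝ)).roots

/-- The Laplacian spectrum of a graph, as the multiset of roots (eigenvalues, with
multiplicity) of the characteristic polynomial of its Laplacian matrix over `ℝ`. -/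
noncomputable def lapSpectrum {α : Type u} [Fintype α] (G : SimpleGraph α) : Multiset ℝ := by
  classical exact (Matrix.charpoly (G.lapMatrix ℝ)).roots

/-!
Write `A_G` for the adjacency matrix and let `H` be `q`-regular on `n` vertices, so that
`A_{F[H]} = A_F ⊗ J + I ⊗ A_H`. An eigenvector `u` of `F` for `μ` lifts to the eigenvector
`(b, a) ↦ u b` of `F[H]` for `n μ + q`. Conversely, let `v` be an eigenvector of `F[H]` for `x`,
and `S b = ∑ a, v (b, a)` its fibre sums. If `S = 0`, every nonzero fibre of `v` is an eigenvector
of `H` for `x`; otherwise `S` is an eigenvector of `F` for `(x - q) / n`. Hence the least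
eigenvalue of `F[H]` is `n λ_min(F) + q` as soon as this is at most `λ_min(H)`.

Since `q` is an eigenvalue of `H` and the eigenvalues sum to `tr A_H = 0`, we have
`q + (n - 1) λ_min(H) ≤ 0`. So the sequence `a₀ = λ_min(H)`, `a_{m+1} = n a_m + q` stays below
`λ_min(H)`, and induction on `m` shows that `a_m = n^m λ_min(H) + q (1 + n + ⋯ + n^(m-1))` is the
least eigenvalue of `H^(m+1) = H^m[H]`.
-/

theorem Matrix.mem_roots_charpoly_iff {K ι : Type*} [Field K] [Fintype ι] [DecidableEq ι]
    (A : Matrix ι ι K) (x : K) : x ∈ A.charpoly.roots ↔ ∃ v, v ≠ 0 ∧ A *ᵥ v = x • v := by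
  rw [Polynomial.mem_roots A.charpoly_monic.ne_zero, ← A.charpoly_toLin',
    ← Module.End.hasEigenvalue_iff_isRoot_charpoly, Module.End.hasEigenvalue_iff,
    Submodule.ne_bot_iff]
  simp only [Module.End.mem_eigenspace_iff, Matrix.toLin'_apply]
  exact exists_congr fun _ => and_comm

section AdjSpectrum

variable {V : Type u} [Fintype V] (G : SimpleGraph V)

theorem adjSpectrum_eq_roots_charpoly [DecidableEq V] [DecidableRel G.Adj] :
    adjSpectrum G = (G.adjMatrix ℝ).charpoly.roots := by
  unfold adjSpectrum
  congr!

theorem mem_adjSpectrum_iff [DecidableEq V] [DecidableRel G.Adj] (x : ℝ) :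
    x ∈ adjSpectrum G ↔ ∃ v, v ≠ 0 ∧ G.adjMatrix ℝ *ᵥ v = x • v := by
  rw [adjSpectrum_eq_roots_charpoly, Matrix.mem_roots_charpoly_iff]

theorem splits_charpoly_adjMatrix [DecidableEq V] [DecidableRel G.Adj] :
    (G.adjMatrix ℝ).charpoly.Splits :=
  Matrix.IsHermitian.splits_charpoly G.isSymm_adjMatrix

theorem card_adjSpectrum : Multiset.card (adjSpectrum G) = Fintype.card V := by
  classical
  rw [adjSpectrum_eq_roots_charpoly,
    Polynomial.splits_iff_card_roots.mp (splits_charpoly_adjMatrix G),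
    Matrix.charpoly_natDegree_eq_dim]

theorem sum_adjSpectrum : (adjSpectrum G).sum = 0 := by
  classical
  rw [adjSpectrum_eq_roots_charpoly, ← Matrix.trace_eq_sum_roots_charpoly_of_splits
    (splits_charpoly_adjMatrix G), SimpleGraph.trace_adjMatrix]

theorem gdeg_eq_degree [DecidableRel G.Adj] (v : V) : gdeg G v = G.degree v := by
  unfold gdeg
  congr!

end AdjSpectrum

theorem nonempty_of_mem_adjSpectrum {V : Type u} [Fintype V] {G : SimpleGraph V} {x : ℝ}
    (hx : x ∈ adjSpectrum G) : Nonempty V :=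
  Fintype.card_pos_iff.mp (card_adjSpectrum G ▸ Multiset.card_pos_iff_exists_mem.mpr ⟨x, hx⟩)

namespace SimpleGraph.IsRegularOfDegree

variable {V : Type u} [Fintype V] {G : SimpleGraph V} [DecidableRel G.Adj] {q : ℕ}

theorem sum_adjMatrix_mulVec (hG : G.IsRegularOfDegree q) (w : V → ℝ) :
    ∑ v, (G.adjMatrix ℝ *ᵥ w) v = q * ∑ v, w v := by
  have hrow : G.adjMatrix ℝ *ᵥ 1 = fun _ => (q : ℝ) := by
    ext v
    simpa using adjMatrix_mulVec_const_apply_of_regular (a := (1 : ℝ)) (v := v) hG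
  calc ∑ v, (G.adjMatrix ℝ *ᵥ w) v = 1 ⬝ᵥ (G.adjMatrix ℝ *ᵥ w) := (one_dotProduct _).symm
    _ = (G.adjMatrix ℝ *ᵥ 1) ⬝ᵥ w := by
      rw [Matrix.dotProduct_mulVec, ← Matrix.mulVec_transpose, G.transpose_adjMatrix]
    _ = q * ∑ v, w v := by rw [hrow, dotProduct, mul_sum]

theorem degree_mem_adjSpectrum [Nonempty V] (hG : G.IsRegularOfDegree q) :
    (q : ℝ) ∈ adjSpectrum G := by
  classical
  refine (mem_adjSpectrum_iff G _).mpr ⟨fun _ => 1, one_ne_zero, ?_⟩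
  ext v
  simpa using adjMatrix_mulVec_const_apply_of_regular hG (a := (1 : ℝ)) (v := v)

theorem degree_add_card_sub_one_mul_le_zero (hG : G.IsRegularOfDegree q) {lam : ℝ}
    (hlam : IsLeast {x | x ∈ adjSpectrum G} lam) :
    (q : ℝ) + (Fintype.card V - 1) * lam ≤ 0 := by
  have := nonempty_of_mem_adjSpectrum hlam.1
  have hq := hG.degree_mem_adjSpectrum
  have hrest : ((adjSpectrum G).erase (q : ℝ)).sum = -q := by
    rw [eq_neg_iff_add_eq_zero, add_comm, ← Multiset.sum_cons, Multiset.cons_erase hq,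
      sum_adjSpectrum]
  have hcard : (Multiset.card ((adjSpectrum G).erase (q : ℝ)) : ℝ) = Fintype.card V - 1 := by
    rw [Multiset.card_erase_of_mem hq, card_adjSpectrum, Nat.pred_eq_sub_one,
      Nat.cast_pred Fintype.card_pos]
  have hbound := Multiset.card_nsmul_le_sum (s := (adjSpectrum G).erase (q : ℝ))
    fun x hx => hlam.2 (Multiset.mem_of_mem_erase hx)
  rw [nsmul_eq_mul, hcard, hrest] at hbound
  linarith

end SimpleGraph.IsRegularOfDegree

section LexProd

variable {β α : Type u} (F : SimpleGraph β) (H : SimpleGraph α)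

instance lexProd.instDecidableRel [DecidableEq β] [DecidableRel F.Adj] [DecidableRel H.Adj] :
    DecidableRel (lexProd F H).Adj :=
  fun _ _ => inferInstanceAs (Decidable (_ ∨ _))

@[simp]
theorem lexProd_adj {x y : β × α} :
    (lexProd F H).Adj x y ↔ F.Adj x.1 y.1 ∨ x.1 = y.1 ∧ H.Adj x.2 y.2 :=
  Iff.rfl

theorem adjMatrix_lexProd_apply [DecidableEq β] [DecidableRel F.Adj] [DecidableRel H.Adj]
    (x y : β × α) :
    (lexProd F H).adjMatrix ℝ x y =
      F.adjMatrix ℝ x.1 y.1 + if x.1 = y.1 then H.adjMatrix ℝ x.2 y.2 else 0 := by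
  simp only [SimpleGraph.adjMatrix_apply, lexProd_adj]
  by_cases h : x.1 = y.1 <;> simp [h]

variable [Fintype β] [Fintype α]

theorem adjMatrix_lexProd_mulVec_apply [DecidableEq β] [DecidableRel F.Adj] [DecidableRel H.Adj]
    (v : β × α → ℝ) (b : β) (a : α) :
    ((lexProd F H).adjMatrix ℝ *ᵥ v) (b, a) =
      (F.adjMatrix ℝ *ᵥ fun b' => ∑ a', v (b', a')) b +
        (H.adjMatrix ℝ *ᵥ fun a' => v (b, a')) a := by
  simp only [mulVec, dotProduct, Fintype.sum_prod_type, adjMatrix_lexProd_apply, add_mul,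
    sum_add_distrib, ite_mul, zero_mul, mul_sum, sum_ite_irrel, sum_const_zero, sum_ite_eq,
    mem_univ, if_true]

variable {H} [DecidableRel H.Adj] {q : ℕ}

theorem card_mul_add_mem_adjSpectrum_lexProd [Nonempty α] (hH : H.IsRegularOfDegree q) {μ : ℝ}
    (hμ : μ ∈ adjSpectrum F) : (Fintype.card α : ℝ) * μ + q ∈ adjSpectrum (lexProd F H) := by
  classical
  obtain ⟨u, hu, hFu⟩ := (mem_adjSpectrum_iff F μ).mp hμ
  refine (mem_adjSpectrum_iff _ _).mpr ⟨fun x => u x.1, ?_, ?_⟩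
  · obtain ⟨b, hb⟩ := Function.ne_iff.mp hu
    exact Function.ne_iff.mpr ⟨(b, Classical.arbitrary α), hb⟩
  ext ⟨b, a⟩
  have hfibre : (fun b' => ∑ _a : α, u b') = (Fintype.card α : ℝ) • u := by
    ext b'
    simp
  rw [adjMatrix_lexProd_mulVec_apply, hfibre, mulVec_smul, hFu]
  simpa [mul_assoc, add_mul] using
    SimpleGraph.adjMatrix_mulVec_const_apply_of_regular (a := u b) (v := a) hH

theorem mem_adjSpectrum_lexProd [Nonempty α] (hH : H.IsRegularOfDegree q) {x : ℝ}
    (hx : x ∈ adjSpectrum (lexProd F H)) :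
    (∃ μ ∈ adjSpectrum F, x = (Fintype.card α : ℝ) * μ + q) ∨ x ∈ adjSpectrum H := by
  classical
  obtain ⟨v, hv, hAv⟩ := (mem_adjSpectrum_iff _ x).mp hx
  set S : β → ℝ := fun b => ∑ a, v (b, a)
  have heq (b : β) (a : α) :
      (F.adjMatrix ℝ *ᵥ S) b + (H.adjMatrix ℝ *ᵥ fun a' => v (b, a')) a = x * v (b, a) := by
    rw [← adjMatrix_lexProd_mulVec_apply]
    exact congrFun hAv (b, a)
  by_cases hS : S = 0
  · right
    obtain ⟨⟨b, a⟩, hba⟩ := Function.ne_iff.mp hv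
    refine (mem_adjSpectrum_iff H x).mpr ⟨fun a' => v (b, a'), Function.ne_iff.mpr ⟨a, hba⟩, ?_⟩
    ext a'
    simpa [hS] using heq b a'
  · left
    have hsum (b : β) : Fintype.card α * (F.adjMatrix ℝ *ᵥ S) b + q * S b = x * S b := by
      have := Finset.sum_congr rfl fun a (_ : a ∈ univ) => heq b a
      rwa [sum_add_distrib, sum_const, card_univ, nsmul_eq_mul, hH.sum_adjMatrix_mulVec,
        ← mul_sum] at this
    have hcard : (Fintype.card α : ℝ) ≠ 0 := by positivity
    refine ⟨(x - q) / Fintype.card α, (mem_adjSpectrum_iff F _).mpr ⟨S, hS, ?_⟩, ?_⟩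
    · ext b
      rw [Pi.smul_apply, smul_eq_mul, div_mul_eq_mul_div, eq_div_iff hcard]
      linarith [hsum b]
    · field_simp
      ring

theorem isLeast_adjSpectrum_lexProd [Nonempty α] (hH : H.IsRegularOfDegree q) {μ lam : ℝ}
    (hμ : IsLeast {x | x ∈ adjSpectrum F} μ) (hlam : lam ∈ lowerBounds {x | x ∈ adjSpectrum H})
    (hle : (Fintype.card α : ℝ) * μ + q ≤ lam) :
    IsLeast {x | x ∈ adjSpectrum (lexProd F H)} ((Fintype.card α : ℝ) * μ + q) := by
  refine ⟨card_mul_add_mem_adjSpectrum_lexProd F hH hμ.1, fun x hx => ?_⟩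
  rcases mem_adjSpectrum_lexProd F hH hx with ⟨ν, hν, rfl⟩ | hxH
  · gcongr
    exact hμ.2 hν
  · exact hle.trans (hlam hxH)

end LexProd

theorem isLeast_adjSpectrum_lexPow {α : Type u} [Fintype α] {H : SimpleGraph α}
    [DecidableRel H.Adj] {q : ℕ} (hH : H.IsRegularOfDegree q) {lam : ℝ}
    (hlam : IsLeast {x | x ∈ adjSpectrum H} lam) (m : ℕ) :
    IsLeast {x | x ∈ adjSpectrum (lexPow H (m + 1))}
      ((Fintype.card α : ℝ) ^ m * lam + q * ∑ i ∈ range m, (Fintype.card α : ℝ) ^ i) := by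
  have := nonempty_of_mem_adjSpectrum hlam.1
  have hbase := hH.degree_add_card_sub_one_mul_le_zero hlam
  set n : ℝ := (Fintype.card α : ℝ)
  have hn : 0 ≤ n := Nat.cast_nonneg _
  induction m with
  | zero =>
    simp only [pow_zero, one_mul, range_zero, sum_empty, mul_zero, add_zero]
    exact hlam
  | succ m ih =>
    set a := n ^ m * lam + q * ∑ i ∈ range m, n ^ i
    have hstep : n ^ (m + 1) * lam + q * ∑ i ∈ range (m + 1), n ^ i = n * a + q := by
      rw [geom_sum_succ]
      ring
    have ha : a ≤ lam := by
      have hdiff : a - lam = (∑ i ∈ range m, n ^ i) * (q + (n - 1) * lam) := by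
        linear_combination -lam * geom_sum_mul n m
      have hsum : 0 ≤ ∑ i ∈ range m, n ^ i := sum_nonneg fun i _ => pow_nonneg hn i
      exact sub_nonpos.mp (hdiff ▸ mul_nonpos_of_nonneg_of_nonpos hsum hbase)
    rw [hstep]
    classical
    exact isLeast_adjSpectrum_lexProd (lexPow H (m + 1)) hH ih hlam.2
      (by linarith [mul_le_mul_of_nonneg_left ha hn])

theorem least_eigenvalue_lexPow_general {α : Type u} [Fintype α]
    (H : SimpleGraph α) (n q : ℕ)
    (hn : Fintype.card α = n) (hn2 : 2 ≤ n)
    (hreg : ∀ v, gdeg H v = q)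
    (lam : ℝ) (hmem : lam ∈ adjSpectrum H) (hleast : ∀ x ∈ adjSpectrum H, lam ≤ x) :
    ∀ k : ℕ, 1 ≤ k →
      ((n : ℝ) ^ (k - 1) * lam + (q : ℝ) * ((n : ℝ) ^ (k - 1) - 1) / ((n : ℝ) - 1))
          ∈ adjSpectrum (lexPow H k) ∧
      ∀ x ∈ adjSpectrum (lexPow H k),
        (n : ℝ) ^ (k - 1) * lam + (q : ℝ) * ((n : ℝ) ^ (k - 1) - 1) / ((n : ℝ) - 1) ≤ x := by
  classical
  intro k hk
  obtain ⟨m, rfl⟩ : ∃ m, k = m + 1 := ⟨k - 1, by omega⟩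
  have hH : H.IsRegularOfDegree q := fun v => (gdeg_eq_degree H v).symm.trans (hreg v)
  have hn1 : (n : ℝ) ≠ 1 := by exact_mod_cast (show n ≠ 1 by omega)
  have key := isLeast_adjSpectrum_lexPow hH ⟨hmem, fun x hx => hleast x hx⟩ m
  rw [hn, geom_sum_eq hn1, ← mul_div_assoc] at key
  exact ⟨key.1, fun x hx => key.2 hx⟩

/-- The least adjacency eigenvalue of the lexicographic power `H^k` of a
connected `q`-regular graph `H` of order `n ≥ 2` with at least one edge equals
`n^(k-1)·λₙ(H) + q·(n^(k-1) - 1)/(n - 1)`. -/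
theorem least_eigenvalue_lexPow {α : Type u} [Fintype α]
    (H : SimpleGraph α) (n q : ℕ)
    (hn : Fintype.card α = n) (hn2 : 2 ≤ n) (hconn : H.Connected)
    (hreg : ∀ v, gdeg H v = q) (hedge : H.edgeSet.Nonempty)
    (lam : ℝ) (hmem : lam ∈ adjSpectrum H) (hleast : ∀ x ∈ adjSpectrum H, lam ≤ x) :
    ∀ k : ℕ, 1 ≤ k →
      ((n : ℝ) ^ (k - 1) * lam + (q : ℝ) * ((n : ℝ) ^ (k - 1) - 1) / ((n : ℝ) - 1))
          ∈ adjSpectrum (lexPow H k) ∧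
      ∀ x ∈ adjSpectrum (lexPow H k),
        (n : ℝ) ^ (k - 1) * lam + (q : ℝ) * ((n : ℝ) ^ (k - 1) - 1) / ((n : ℝ) - 1) ≤ x :=
  least_eigenvalue_lexPow_general H n q hn hn2 hreg lam hmem hleast
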